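/- Let Δ be a dyadic cube of rank s in 𝔾^d, let E ⊆ Δ be a Borel set with positive Haar measure, and fix l ∈ ℕ. Then there exists k₀ ≥ s such that for all k₁ > k₂ > ... > k_l ≥ k₀ there exists a point g ∈ Δ with the property that g ⊕ (⊕_{i=1}^{l} e^{σ^i}_{k_i}) ∈ E for every choice of sign vectors σ^1, ..., σ^l ∈ {0,1}^d, where e^σ_k ∈ 𝔾^d is the element whose j-th component is σ_j·e_k (e_k being the k-th generator of 𝔾). -/

import Mathlib

open MeasureTheory

/-- The dyadic group `𝔾`: 0-1 sequences with coordinatewise addition mod 2. -/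
abbrev DyadicGroup : Type := ℕ → ZMod 2

/-- The dyadic cube of rank `s` in `𝔾^d` with base point `m`. -/
def dyadicCube (d s : ℕ) (m : Fin d → DyadicGroup) : Set (Fin d → DyadicGroup) :=
  {g | ∀ l : Fin d, ∀ j < s, g l j = m l j}

/-- The element `⊕_{i=1}^{l} e^{σ^i}_{k_i}` of `𝔾^d`, where `e^σ_k` has `j`-th
component `σ_j e_k` (`e_k` being the `k`-th generator of `𝔾`). -/
def offset {d l : ℕ} (k : Fin l → ℕ) (σ : Fin l → Fin d → ZMod 2) :
    Fin d → DyadicGroup :=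
  fun i t => ∑ u, if t = k u then σ u i else 0

/-!
Cylinder sets, i.e. finite unions of dyadic cubes, form an algebra generating the Borel
σ-algebra, so `E` is approximated in measure by a cylinder set of rank at least `s`. Summing over
its cubes, some dyadic cube `C` of rank `k₀ ≥ s` satisfies `N μ(C \ E) < μ C`, where `N = 2^(l d)`
is the number of sign choices. An offset supported in ranks `≥ k₀` maps `C` onto itself and
preserves `μ`, so the `N` translates of `C \ E` by the offsets cannot cover `C`. Any `g ∈ C`
outside them works, and `g ∈ E ⊆ Δ` by the choice `σ = 0`.
-/

open Set symmDiff ENNReal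

theorem exists_mem_forall_add_mem_of_card_mul_measure_diff_lt {G : Type*} [AddCommGroup G]
    [MeasurableSpace G] [MeasurableAdd G] (μ : Measure G) [μ.IsAddLeftInvariant]
    {κ : Type*} [Fintype κ] (v : κ → G) {C E : Set G}
    (hC : ∀ j, (· + v j) ⁻¹' C = C) (h : Fintype.card κ * μ (C \ E) < μ C) :
    ∃ g ∈ C, ∀ j, g + v j ∈ E := by
  have hbad : μ (⋃ j, (· + v j) ⁻¹' (C \ E)) < μ C :=
    calc μ (⋃ j, (· + v j) ⁻¹' (C \ E)) ≤ ∑ j, μ ((· + v j) ⁻¹' (C \ E)) :=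
          measure_iUnion_fintype_le _ _
      _ = Fintype.card κ * μ (C \ E) := by
        simp only [measure_preimage_add_right, Finset.sum_const, Finset.card_univ, nsmul_eq_mul]
      _ < μ C := h
  obtain ⟨g, hgC, hg⟩ := not_subset.mp fun hsub => (measure_mono hsub).not_gt hbad
  refine ⟨g, hgC, fun j => ?_⟩
  by_contra hE
  exact hg (mem_iUnion.mpr ⟨j, by rw [preimage_sdiff, hC j]; exact ⟨hgC, hE⟩⟩)

theorem measure_preimage_le_mul_of_forall_fiber {X β : Type*} [MeasurableSpace X] [Finite β]
    {μ ν : Measure X} {f : X → β} (hf : ∀ b, MeasurableSet (f ⁻¹' {b})) (c : ℝ≥0∞)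
    (h : ∀ b, μ (f ⁻¹' {b}) ≤ c * ν (f ⁻¹' {b})) (S : Set β) :
    μ (f ⁻¹' S) ≤ c * ν (f ⁻¹' S) := by
  have := Fintype.ofFinite β
  classical
  rw [← S.coe_toFinset, ← sum_measure_preimage_singleton _ fun b _ => hf b,
    ← sum_measure_preimage_singleton _ fun b _ => hf b, Finset.mul_sum]
  exact Finset.sum_le_sum fun b _ => h b

namespace DyadicGroup

variable {ι : Type*}

/-- The fibres of `truncate k` are the dyadic cubes of rank `k`. -/
def truncate (k : ℕ) (x : ι → DyadicGroup) : ι → Fin k → ZMod 2 := fun i j => x i j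

theorem measurable_truncate (k : ℕ) : Measurable (truncate (ι := ι) k) := by
  unfold truncate
  fun_prop

theorem preimage_truncate_of_le {k k' : ℕ} (h : k ≤ k') (S : Set (ι → Fin k → ZMod 2)) :
    truncate k ⁻¹' S = truncate k' ⁻¹' ((fun a i j => a i (Fin.castLE h j)) ⁻¹' S) :=
  rfl

theorem truncate_add_of_forall_lt {k : ℕ} {v : ι → DyadicGroup} (hv : ∀ i, ∀ t < k, v i t = 0)
    (x : ι → DyadicGroup) : truncate k (x + v) = truncate k x := by
  funext i j
  simp [truncate, hv i j j.isLt]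

variable (ι) in
def cylinders : Set (Set (ι → DyadicGroup)) :=
  {A | ∃ k S, A = truncate k ⁻¹' S}

theorem isSetAlgebra_cylinders : IsSetAlgebra (cylinders ι) where
  empty_mem := ⟨0, ∅, rfl⟩
  compl_mem := by
    rintro _ ⟨k, S, rfl⟩
    exact ⟨k, Sᶜ, rfl⟩
  union_mem := by
    rintro _ _ ⟨k, S, rfl⟩ ⟨k', S', rfl⟩
    rw [preimage_truncate_of_le (le_max_left k k'), preimage_truncate_of_le (le_max_right k k'),
      ← preimage_union]
    exact ⟨_, _, rfl⟩

variable [Finite ι] in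
theorem generateFrom_cylinders :
    MeasurableSpace.generateFrom (cylinders ι) = MeasurableSpace.pi := by
  refine le_antisymm (MeasurableSpace.generateFrom_le ?_) ?_
  · rintro _ ⟨k, S, rfl⟩
    exact measurable_truncate k S.toFinite.measurableSet
  · refine iSup_le fun i => MeasurableSpace.comap_le_iff_le_map.mpr <|
      iSup_le fun j => MeasurableSpace.comap_le_iff_le_map.mpr fun u _ => ?_
    exact MeasurableSpace.measurableSet_generateFrom
      ⟨j + 1, {a | a i ⟨j, j.lt_succ_self⟩ ∈ u}, rfl⟩

variable [Finite ι]

theorem exists_preimage_truncate_measure_symmDiff_lt (μ : Measure (ι → DyadicGroup))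
    [IsFiniteMeasure μ] {E : Set (ι → DyadicGroup)} (hE : MeasurableSet E) (s : ℕ)
    {ε : ℝ≥0∞} (hε : ε ≠ 0) : ∃ k ≥ s, ∃ S, μ (E ∆ (truncate k ⁻¹' S)) < ε := by
  obtain ⟨r, -, hr, hrε⟩ := ENNReal.lt_iff_exists_real_btwn.mp (pos_iff_ne_zero.mpr hε)
  obtain ⟨_, ⟨k, S, rfl⟩, hES⟩ :=
    (Measure.MeasureDense.of_generateFrom_isSetAlgebra_finite μ isSetAlgebra_cylinders
      generateFrom_cylinders.symm).approx E hE (measure_ne_top μ E) r (ENNReal.ofReal_pos.mp hr)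
  rw [preimage_truncate_of_le (le_max_left k s)] at hES
  exact ⟨max k s, le_max_right k s, _, hES.trans hrε⟩

theorem exists_truncate_fiber_mul_measure_diff_lt (μ : Measure (ι → DyadicGroup))
    [IsFiniteMeasure μ] {E : Set (ι → DyadicGroup)} (hE : MeasurableSet E) (hμE : μ E ≠ 0)
    (N s : ℕ) :
    ∃ k ≥ s, ∃ a, N * μ (truncate k ⁻¹' {a} \ E) < μ (truncate k ⁻¹' {a}) := by
  by_contra! h
  have hcyl : ∀ k ≥ s, ∀ S, μ E ≤ (N + 1) * μ (E ∆ (truncate k ⁻¹' S)) := by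
    intro k hk S
    have hfiber (b) : MeasurableSet (truncate (ι := ι) k ⁻¹' {b}) :=
      measurable_truncate k (measurableSet_singleton b)
    have hfiber_le (b) : μ (truncate k ⁻¹' {b}) ≤ N * μ.restrict Eᶜ (truncate k ⁻¹' {b}) := by
      rw [Measure.restrict_apply (hfiber b), ← sdiff_eq]
      exact h k hk b
    have hS := measure_preimage_le_mul_of_forall_fiber hfiber N hfiber_le S
    rw [Measure.restrict_apply (measurable_truncate k S.toFinite.measurableSet), ← sdiff_eq] at hS
    calc μ E ≤ μ (E ∆ (truncate k ⁻¹' S) ∪ truncate k ⁻¹' S) :=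
          measure_mono (le_symmDiff_sup_right _ _)
      _ ≤ μ (E ∆ (truncate k ⁻¹' S)) + μ (truncate k ⁻¹' S) := measure_union_le _ _
      _ ≤ μ (E ∆ (truncate k ⁻¹' S)) + N * μ (E ∆ (truncate k ⁻¹' S)) := by
          grw [hS]
          gcongr
          exact fun x hx => Or.inr hx
      _ = (N + 1) * μ (E ∆ (truncate k ⁻¹' S)) := by ring
  obtain ⟨ε, hε, hεE⟩ := ENNReal.exists_nnreal_pos_mul_lt (natCast_ne_top (N + 1)) hμE
  obtain ⟨k, hk, S, hS⟩ :=
    exists_preimage_truncate_measure_symmDiff_lt μ hE s (ε := ε) (by simpa using hε.ne')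
  refine (hcyl k hk S).not_gt (lt_of_lt_of_le ?_ hεE.le)
  rw [mul_comm]
  push_cast
  exact ENNReal.mul_lt_mul_left (by positivity) (by simp) hS

end DyadicGroup

theorem offset_zero {d l : ℕ} (k : Fin l → ℕ) :
    offset (d := d) k (0 : Fin l → Fin d → ZMod 2) = 0 := by
  funext i t
  simp [offset]

theorem offset_apply_of_lt {d l k₀ : ℕ} {k : Fin l → ℕ} (hk : ∀ u, k₀ ≤ k u)
    (σ : Fin l → Fin d → ZMod 2) (i : Fin d) {t : ℕ} (ht : t < k₀) : offset k σ i t = 0 :=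
  Finset.sum_eq_zero fun u _ => if_neg (by have := hk u; omega)

open DyadicGroup in
/-- Lemma 2 (density lemma): let `μ` be the normalized Haar measure on `𝔾^d`
(characterized as a translation-invariant Borel probability measure), `Δ` a
dyadic cube of rank `s`, `E ⊆ Δ` a Borel set of positive measure, and
`l ∈ ℕ`.  Then there is `k₀ ≥ s` such that for all `k₁ > … > k_l ≥ k₀` there
is a point `g ∈ Δ` with `g ⊕ (⊕_{i=1}^l e^{σ^i}_{k_i}) ∈ E` for every choice
of signs `σ¹, …, σˡ ∈ {0,1}^d`. -/
theorem density_translation_lemma (d : ℕ) (μ : Measure (Fin d → DyadicGroup))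
    (hμ1 : μ Set.univ = 1)
    (hinv : ∀ x : Fin d → DyadicGroup, Measure.map (fun g => x + g) μ = μ)
    (s : ℕ) (m : Fin d → DyadicGroup) (E : Set (Fin d → DyadicGroup))
    (hEΔ : E ⊆ dyadicCube d s m) (hEmeas : MeasurableSet E) (hEpos : 0 < μ E)
    (l : ℕ) :
    ∃ k₀, s ≤ k₀ ∧
      ∀ k : Fin l → ℕ, StrictAnti k → (∀ i, k₀ ≤ k i) →
        ∃ g ∈ dyadicCube d s m,
          ∀ σ : Fin l → Fin d → ZMod 2, g + offset k σ ∈ E := by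
  have : IsFiniteMeasure μ := ⟨by simp [hμ1]⟩
  have : μ.IsAddLeftInvariant := ⟨hinv⟩
  obtain ⟨k₀, hk₀, a, ha⟩ := exists_truncate_fiber_mul_measure_diff_lt μ hEmeas hEpos.ne'
    (Fintype.card (Fin l → Fin d → ZMod 2)) s
  refine ⟨k₀, hk₀, fun k _ hk => ?_⟩
  have hcube (σ : Fin l → Fin d → ZMod 2) :
      (· + offset k σ) ⁻¹' (truncate k₀ ⁻¹' {a}) = truncate k₀ ⁻¹' {a} := by
    ext x
    simp [truncate_add_of_forall_lt fun i t => offset_apply_of_lt hk σ i]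
  obtain ⟨g, -, hg⟩ := exists_mem_forall_add_mem_of_card_mul_measure_diff_lt μ (offset k) hcube ha
  exact ⟨g, hEΔ (by simpa [offset_zero] using hg 0), hg⟩
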